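/- Let H be a compact group acting continuously, freely on a compact Hausdorff space M̃, with quotient M = M̃/H and quotient map q. Define on C(M̃) the C(M)-valued inner product ⟨φ₁, φ₂⟩(m) = ∫_H conj(φ₁(h·x)) φ₂(h·x) dh where q(x) = m (normalized Haar measure on H). Then this is well defined (independent of the choice of x in the fiber over m), ⟨φ, φ⟩(m) ≥ 0 for all m, and ⟨φ, φ⟩ = 0 implies φ = 0. -/

import Mathlib

open MeasureTheory ComplexConjugate

/-!
Normalized Haar measure on a compact group is also right invariant, so replacing `x` by `g • x`
only reparametrizes the integral by `h ↦ h * g`. The integrand of `⟨φ, φ⟩(x)` is `‖φ (h • x)‖²`,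
a continuous nonnegative function of `h`; since Haar measure charges every nonempty open set,
its integral vanishes only if it vanishes identically, in particular at `h = 1`, where it is `‖φ x‖²`.
-/

lemma MeasureTheory.Measure.IsHaarMeasure.isMulRightInvariant_of_isProbabilityMeasure
    {H : Type*} [Group H] [TopologicalSpace H] [IsTopologicalGroup H]
    [CompactSpace H] [MeasurableSpace H] [BorelSpace H]
    (μ : Measure H) [μ.IsHaarMeasure] [IsProbabilityMeasure μ] :
    μ.IsMulRightInvariant where
  map_mul_right_eq_self g :=
    have : IsProbabilityMeasure (μ.map (· * g)) :=
      Measure.isProbabilityMeasure_map (measurable_mul_const g).aemeasurable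
    Measure.isHaarMeasure_eq_of_isProbabilityMeasure _ μ

lemma integral_comp_smul_smul {H X E : Type*} [Group H] [MeasurableSpace H] [MeasurableMul H]
    [MulAction H X] [NormedAddCommGroup E] [NormedSpace ℝ E]
    (μ : Measure H) [μ.IsMulRightInvariant] (f : X → E) (g : H) (x : X) :
    ∫ h, f (h • g • x) ∂μ = ∫ h, f (h • x) ∂μ := by
  simpa only [mul_smul] using integral_mul_right_eq_self (μ := μ) (fun h ↦ f (h • x)) g

lemma integral_conj_mul_self {α : Type*} [MeasurableSpace α] (μ : Measure α) (f : α → ℂ) :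
    ∫ a, conj (f a) * f a ∂μ = ((∫ a, ‖f a‖ ^ 2 ∂μ : ℝ) : ℂ) := by
  simp only [Complex.conj_mul', ← Complex.ofReal_pow]
  exact integral_ofReal

lemma eq_zero_of_integral_norm_sq_comp_smul_eq_zero
    {H X E : Type*} [Group H] [TopologicalSpace H] [CompactSpace H] [MeasurableSpace H]
    [OpensMeasurableSpace H] (μ : Measure H) [μ.IsOpenPosMeasure] [IsFiniteMeasureOnCompacts μ]
    [TopologicalSpace X] [MulAction H X] [ContinuousSMul H X] [NormedAddCommGroup E]
    {φ : X → E} (hφ : Continuous φ) {x : X} (hint : ∫ h, ‖φ (h • x)‖ ^ 2 ∂μ = 0) :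
    φ x = 0 := by
  by_contra hx
  have hpos : 0 < ∫ h, ‖φ (h • x)‖ ^ 2 ∂μ :=
    Continuous.integral_pos_of_hasCompactSupport_nonneg_nonzero (x := 1) (by fun_prop)
      (HasCompactSupport.of_compactSpace _) (fun _ ↦ by positivity) (by simpa using hx)
  exact hpos.ne' hint

theorem morita_inner_product_well_defined_general
    {H X : Type*} [Group H] [TopologicalSpace H] [IsTopologicalGroup H]
    [CompactSpace H] [MeasurableSpace H] [BorelSpace H]
    (μ : Measure H) [μ.IsHaarMeasure] [IsProbabilityMeasure μ]
    [TopologicalSpace X]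
    [MulAction H X] [ContinuousSMul H X]
    (I : C(X, ℂ) → C(X, ℂ) → X → ℂ)
    (hI : I = fun φ₁ φ₂ x => ∫ h : H, (starRingEnd ℂ) (φ₁ (h • x)) * φ₂ (h • x) ∂μ) :
    -- well defined: the value only depends on the `H`-orbit of `x`
    (∀ (φ₁ φ₂ : C(X, ℂ)) (x y : X), (∃ h : H, h • x = y) → I φ₁ φ₂ x = I φ₁ φ₂ y) ∧
    -- positivity: `⟨φ,φ⟩(m) ≥ 0`
    (∀ (φ : C(X, ℂ)) (x : X), 0 ≤ (I φ φ x).re ∧ (I φ φ x).im = 0) ∧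
    -- definiteness: `⟨φ,φ⟩ = 0` implies `φ = 0`
    (∀ φ : C(X, ℂ), (∀ x : X, I φ φ x = 0) → φ = 0) := by
  have := Measure.IsHaarMeasure.isMulRightInvariant_of_isProbabilityMeasure μ
  subst hI
  dsimp only
  refine ⟨?_, fun φ x ↦ ?_, fun φ hφ ↦ ?_⟩
  · rintro φ₁ φ₂ x _ ⟨g, rfl⟩
    exact (integral_comp_smul_smul μ (fun y ↦ conj (φ₁ y) * φ₂ y) g x).symm
  · rw [integral_conj_mul_self, Complex.ofReal_re, Complex.ofReal_im]
    exact ⟨integral_nonneg fun _ ↦ by positivity, rfl⟩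
  · ext x
    have hx := hφ x
    rw [integral_conj_mul_self, Complex.ofReal_eq_zero] at hx
    exact eq_zero_of_integral_norm_sq_comp_smul_eq_zero μ φ.continuous hx

/-- The `C(M)`-valued inner product `⟨φ₁,φ₂⟩(m) = ∫_H conj(φ₁(h·x)) φ₂(h·x) dh`
(where `q x = m`) on `C(M̃)`, for a free action of a compact group `H` on a compact
Hausdorff space `M̃`, is well defined on fibers, positive, and definite. -/
theorem morita_inner_product_well_defined
    {H X : Type*} [Group H] [TopologicalSpace H] [IsTopologicalGroup H]
    [CompactSpace H] [MeasurableSpace H] [BorelSpace H]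
    (μ : Measure H) [μ.IsHaarMeasure] [IsProbabilityMeasure μ]
    [TopologicalSpace X] [CompactSpace X] [T2Space X]
    [MulAction H X] [ContinuousSMul H X]
    (hfree : ∀ (h : H) (x : X), h • x = x → h = 1)
    (I : C(X, ℂ) → C(X, ℂ) → X → ℂ)
    (hI : I = fun φ₁ φ₂ x => ∫ h : H, (starRingEnd ℂ) (φ₁ (h • x)) * φ₂ (h • x) ∂μ) :
    -- well defined: the value only depends on the `H`-orbit of `x`
    (∀ (φ₁ φ₂ : C(X, ℂ)) (x y : X), (∃ h : H, h • x = y) → I φ₁ φ₂ x = I φ₁ φ₂ y) ∧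
    -- positivity: `⟨φ,φ⟩(m) ≥ 0`
    (∀ (φ : C(X, ℂ)) (x : X), 0 ≤ (I φ φ x).re ∧ (I φ φ x).im = 0) ∧
    -- definiteness: `⟨φ,φ⟩ = 0` implies `φ = 0`
    (∀ φ : C(X, ℂ), (∀ x : X, I φ φ x = 0) → φ = 0) :=
  morita_inner_product_well_defined_general μ I hI
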